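/- Let N ≥ 2 and let u(t) = ∑_{j=1}^{N} a⁰_j·cos((2j−1)t) with a⁰_j = ((N−j+2)·sin(πj/(N+1)) − (N−j+1)·sin(π(j−1)/(N+1)))/((N+1)·sin(π/(N+1))). Then for every t ∈ (π/(N+1), π/2], u(t) < u(π/(N+1)). -/

import Mathlib

/-!
Put `s = π / (N + 1)`, `u = e^{is}`, `z = e^{it}`, and let `S(t) = ∑ b_j cos ((2j - 1) t)` with
`b_j` the numerator of `a⁰_j`. Since `u ^ (N + 1) = -1`, `S` splits into four sums
`∑ (a + b j) q^j` with `q = u^{±1} z^{±2}`, whose closed forms add up to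
  `S(t) (cos s - cos 2t)² = sin s (1 - cos s) cos t (1 + cos (2 (N + 1) t))`.
At `t = s` the last factor is `2`; for `s < t ≤ π/2` it is at most `2`, while `0 ≤ cos t < cos s`
and `cos s - cos 2t > cos s - cos 2s > 0`. Hence `S(t) < S(s)`.
-/
open Real Finset

noncomputable def extremalCoeff (N j : ℕ) : ℝ :=
  ((N : ℝ) - j + 2) * sin (π * j / (N + 1)) - ((N : ℝ) - j + 1) * sin (π * (j - 1) / (N + 1))

noncomputable def extremalCosSum (N : ℕ) (t : ℝ) : ℝ :=
  ∑ j ∈ Icc 1 N, extremalCoeff N j * cos ((2 * j - 1) * t)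

lemma sum_Icc_linear_mul_pow {R : Type*} [CommRing R] (a b q : R) (n : ℕ) :
    (q - 1) ^ 2 * ∑ j ∈ Icc 1 n, (a + b * j) * q ^ j
      = (q - 1) * (q ^ (n + 1) - q) * a
        + b * (n * q ^ (n + 1) * q - (n + 1) * q ^ (n + 1) + q) := by
  induction n with
  | zero => simp
  | succ n ih =>
    rw [sum_Icc_succ_top (by omega), mul_add, ih]
    push_cast
    ring

lemma sum_mul_sq_eq_of_pow_eq_neg_one {K : Type*} [Field K] (N : ℕ) (u z : K) (hu : u ≠ 0)
    (hz : z ≠ 0) (huN : u ^ (N + 1) = -1) :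
    (∑ j ∈ Icc 1 N,
        (((N : K) - j + 2) * (u ^ j - u⁻¹ ^ j) - ((N : K) - j + 1) * (u ^ j * u⁻¹ - u⁻¹ ^ j * u))
        * ((z ^ 2) ^ j * z⁻¹ + (z⁻¹ ^ 2) ^ j * z))
      * (u + u⁻¹ - z ^ 2 - z⁻¹ ^ 2) ^ 2
    = (u - u⁻¹) * (z + z⁻¹) * (2 - u - u⁻¹) * (2 + (z ^ 2) ^ (N + 1) + (z⁻¹ ^ 2) ^ (N + 1)) := by
  set A : K := N + 2 - (N + 1) * u⁻¹
  set B : K := u⁻¹ - 1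
  set C : K := (N + 1) * u - (N + 2)
  set D : K := 1 - u
  have hsplit : ∑ j ∈ Icc 1 N,
        (((N : K) - j + 2) * (u ^ j - u⁻¹ ^ j) - ((N : K) - j + 1) * (u ^ j * u⁻¹ - u⁻¹ ^ j * u))
        * ((z ^ 2) ^ j * z⁻¹ + (z⁻¹ ^ 2) ^ j * z)
      = z⁻¹ * ∑ j ∈ Icc 1 N, (A + B * j) * (u * z ^ 2) ^ j
        + z * ∑ j ∈ Icc 1 N, (A + B * j) * (u * z⁻¹ ^ 2) ^ j
        + z⁻¹ * ∑ j ∈ Icc 1 N, (C + D * j) * (u⁻¹ * z ^ 2) ^ j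
        + z * ∑ j ∈ Icc 1 N, (C + D * j) * (u⁻¹ * z⁻¹ ^ 2) ^ j := by
    simp only [mul_sum, ← sum_add_distrib]
    refine sum_congr rfl fun j _ => ?_
    ring
  have hvN : u⁻¹ ^ (N + 1) = -1 := by rw [inv_pow, huN]; norm_num
  have e1 := sum_Icc_linear_mul_pow A B (u * z ^ 2) N
  have e2 := sum_Icc_linear_mul_pow A B (u * z⁻¹ ^ 2) N
  have e3 := sum_Icc_linear_mul_pow C D (u⁻¹ * z ^ 2) N
  have e4 := sum_Icc_linear_mul_pow C D (u⁻¹ * z⁻¹ ^ 2) N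
  have hw : (z⁻¹ ^ 2) ^ (N + 1) = ((z ^ 2) ^ (N + 1))⁻¹ := by rw [inv_pow, inv_pow]
  rw [mul_pow, huN] at e1 e2
  rw [mul_pow, hvN] at e3 e4
  rw [hw] at e2 e4
  rw [hw, hsplit]
  -- the denominators `(q - 1)²` of the four sums pair up into `(u + u⁻¹ - z² - z⁻²)²`
  have hE : u + u⁻¹ - z ^ 2 - z⁻¹ ^ 2 = (u * z ^ 2 - 1) * (u * z⁻¹ ^ 2 - 1) * u⁻¹ := by
    field_simp; ring
  have hE' : u + u⁻¹ - z ^ 2 - z⁻¹ ^ 2 = (u⁻¹ * z ^ 2 - 1) * (u⁻¹ * z⁻¹ ^ 2 - 1) * u := by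
    field_simp; ring
  have hw0 : (z ^ 2) ^ (N + 1) ≠ 0 := by positivity
  generalize (z ^ 2) ^ (N + 1) = w at *
  linear_combination (norm := skip)
    z⁻¹ * u⁻¹ ^ 2 * (u * z⁻¹ ^ 2 - 1) ^ 2 * e1 + z * u⁻¹ ^ 2 * (u * z ^ 2 - 1) ^ 2 * e2
    + z⁻¹ * u ^ 2 * (u⁻¹ * z⁻¹ ^ 2 - 1) ^ 2 * e3 + z * u ^ 2 * (u⁻¹ * z ^ 2 - 1) ^ 2 * e4
    + (z⁻¹ * ∑ j ∈ Icc 1 N, (A + B * j) * (u * z ^ 2) ^ j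
        + z * ∑ j ∈ Icc 1 N, (A + B * j) * (u * z⁻¹ ^ 2) ^ j)
      * (u + u⁻¹ - z ^ 2 - z⁻¹ ^ 2 + (u * z ^ 2 - 1) * (u * z⁻¹ ^ 2 - 1) * u⁻¹) * hE
    + (z⁻¹ * ∑ j ∈ Icc 1 N, (C + D * j) * (u⁻¹ * z ^ 2) ^ j
        + z * ∑ j ∈ Icc 1 N, (C + D * j) * (u⁻¹ * z⁻¹ ^ 2) ^ j)
      * (u + u⁻¹ - z ^ 2 - z⁻¹ ^ 2 + (u⁻¹ * z ^ 2 - 1) * (u⁻¹ * z⁻¹ ^ 2 - 1) * u) * hE'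
  simp only [A, B, C, D]
  field_simp
  ring

namespace Complex

lemma ofReal_cos_eq_exp (θ : ℝ) :
    (Real.cos θ : ℂ) = (exp (θ * I) + (exp (θ * I))⁻¹) / 2 := by
  rw [ofReal_cos, cos, neg_mul, exp_neg]

lemma ofReal_sin_eq_exp (θ : ℝ) :
    (Real.sin θ : ℂ) = ((exp (θ * I))⁻¹ - exp (θ * I)) * I / 2 := by
  rw [ofReal_sin, sin, neg_mul, exp_neg]

lemma exp_ofReal_nat_mul_mul_I (n : ℕ) (θ : ℝ) :
    exp (((n * θ : ℝ) : ℂ) * I) = exp (θ * I) ^ n := by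
  rw [← exp_nat_mul]; push_cast; ring_nf

lemma exp_ofReal_nat_mul_sub_mul_I (n : ℕ) (θ φ : ℝ) :
    exp (((n * θ - φ : ℝ) : ℂ) * I) = exp (θ * I) ^ n * (exp (φ * I))⁻¹ := by
  rw [ofReal_sub, sub_mul, exp_sub, exp_ofReal_nat_mul_mul_I, div_eq_mul_inv]

end Complex

open Complex in
lemma extremalCosSum_mul_sq (N : ℕ) (t : ℝ) :
    extremalCosSum N t * (Real.cos (π / (N + 1)) - Real.cos (2 * t)) ^ 2
      = Real.sin (π / (N + 1)) * (1 - Real.cos (π / (N + 1))) * Real.cos t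
          * (1 + Real.cos (2 * (N + 1) * t)) := by
  set s := π / (N + 1) with hs
  set u := exp (s * I) with hu_def
  set z := exp (t * I) with hz_def
  have hu : u ≠ 0 := exp_ne_zero _
  have hz : z ≠ 0 := exp_ne_zero _
  have huN : u ^ (N + 1) = -1 := by
    rw [← exp_ofReal_nat_mul_mul_I, Nat.cast_succ, hs, mul_div_cancel₀ _ (by positivity),
      exp_pi_mul_I]
  have hz2 : exp (((2 * t : ℝ) : ℂ) * I) = z ^ 2 := by
    exact_mod_cast exp_ofReal_nat_mul_mul_I 2 t
  have hsum : (extremalCosSum N t : ℂ) = -I / 4 * ∑ j ∈ Icc 1 N,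
        (((N : ℂ) - j + 2) * (u ^ j - u⁻¹ ^ j) - ((N : ℂ) - j + 1) * (u ^ j * u⁻¹ - u⁻¹ ^ j * u))
        * ((z ^ 2) ^ j * z⁻¹ + (z⁻¹ ^ 2) ^ j * z) := by
    rw [extremalCosSum, ofReal_sum, mul_sum]
    refine sum_congr rfl fun j _ => ?_
    rw [extremalCoeff, show π * j / (N + 1) = j * s by ring,
      show π * (j - 1) / (N + 1) = j * s - s by ring,
      show (2 * j - 1) * t = j * (2 * t) - t by ring, ofReal_mul, ofReal_sub, ofReal_mul,
      ofReal_mul, ofReal_sin_eq_exp, ofReal_sin_eq_exp, ofReal_cos_eq_exp,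
      exp_ofReal_nat_mul_mul_I, exp_ofReal_nat_mul_sub_mul_I, exp_ofReal_nat_mul_sub_mul_I,
      hz2, ← hu_def, ← hz_def]
    simp only [inv_pow]
    push_cast
    field_simp
    ring
  have hcos_s : (Real.cos s : ℂ) = (u + u⁻¹) / 2 := ofReal_cos_eq_exp s
  have hsin_s : (Real.sin s : ℂ) = (u⁻¹ - u) * I / 2 := ofReal_sin_eq_exp s
  have hcos_t : (Real.cos t : ℂ) = (z + z⁻¹) / 2 := ofReal_cos_eq_exp t
  have hcos_2t : (Real.cos (2 * t) : ℂ) = (z ^ 2 + z⁻¹ ^ 2) / 2 := by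
    rw [ofReal_cos_eq_exp, hz2, inv_pow]
  have hcos_2Nt : (Real.cos (2 * (N + 1) * t) : ℂ)
      = ((z ^ 2) ^ (N + 1) + (z⁻¹ ^ 2) ^ (N + 1)) / 2 := by
    rw [ofReal_cos_eq_exp,
      show 2 * ((N : ℝ) + 1) * t = ((N + 1 : ℕ) : ℝ) * (2 * t) by push_cast; ring,
      exp_ofReal_nat_mul_mul_I, hz2, inv_pow, inv_pow]
  apply ofReal_injective
  simp only [ofReal_mul, ofReal_pow, ofReal_sub, ofReal_add, ofReal_one, hsum, hcos_s, hsin_s,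
    hcos_t, hcos_2t, hcos_2Nt]
  linear_combination (-I / 16) * sum_mul_sq_eq_of_pow_eq_neg_one N u z hu hz huN

lemma extremalCosSum_lt_of_lt (N : ℕ) (t : ℝ) (hst : π / (N + 1) < t) (ht : t ≤ π / 2) :
    extremalCosSum N t < extremalCosSum N (π / (N + 1)) := by
  set s := π / (N + 1) with hs
  have hs0 : 0 < s := by positivity
  have hcos2s : Real.cos (2 * s) < Real.cos s :=
    Real.cos_lt_cos_of_nonneg_of_le_pi hs0.le (by linarith) (by linarith)
  have hcos2t : Real.cos (2 * t) < Real.cos (2 * s) :=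
    Real.cos_lt_cos_of_nonneg_of_le_pi (by linarith) (by linarith) (by linarith)
  have hcost : Real.cos t < Real.cos s :=
    Real.cos_lt_cos_of_nonneg_of_le_pi hs0.le (by linarith) hst
  have hcost0 : 0 ≤ Real.cos t := Real.cos_nonneg_of_mem_Icc ⟨by linarith, ht⟩
  have hK : 0 < Real.sin s * (1 - Real.cos s) := by
    have := Real.cos_lt_cos_of_nonneg_of_le_pi le_rfl (by linarith) hs0
    rw [Real.cos_zero] at this
    exact mul_pos (Real.sin_pos_of_pos_of_lt_pi hs0 (by linarith)) (by linarith)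
  have hperiod : Real.cos (2 * (N + 1) * s) = 1 := by
    rw [show 2 * ((N : ℝ) + 1) * s = 2 * π by rw [hs]; field_simp, Real.cos_two_pi]
  calc extremalCosSum N t
      = Real.sin s * (1 - Real.cos s) * Real.cos t * (1 + Real.cos (2 * (N + 1) * t))
          / (Real.cos s - Real.cos (2 * t)) ^ 2 :=
        eq_div_of_mul_eq (by nlinarith) (extremalCosSum_mul_sq N t)
    _ ≤ Real.sin s * (1 - Real.cos s) * Real.cos t * 2 / (Real.cos s - Real.cos (2 * s)) ^ 2 := by
        gcongr
        linarith [Real.cos_le_one (2 * (N + 1) * t)]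
    _ < Real.sin s * (1 - Real.cos s) * Real.cos s * 2 / (Real.cos s - Real.cos (2 * s)) ^ 2 := by
        gcongr
    _ = extremalCosSum N s := by
        rw [div_eq_iff (by nlinarith), extremalCosSum_mul_sq, hperiod]
        ring

theorem extremal_re_below_peak_general (N : ℕ) (a0 : ℕ → ℝ)
    (ha0 : ∀ j, a0 j =
      (((N : ℝ) - j + 2) * Real.sin (π * j / (N + 1)) -
        ((N : ℝ) - j + 1) * Real.sin (π * (j - 1) / (N + 1))) /
      ((N + 1) * Real.sin (π / (N + 1))))
    (u : ℝ → ℝ)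
    (hu : ∀ t, u t = ∑ j ∈ Finset.Icc 1 N, a0 j * Real.cos ((2 * (j : ℝ) - 1) * t)) :
    ∀ t : ℝ, π / (N + 1) < t → t ≤ π / 2 → u t < u (π / (N + 1)) := by
  intro t hst ht
  have hu_eq : ∀ x, u x = extremalCosSum N x / ((N + 1) * Real.sin (π / (N + 1))) := fun x => by
    rw [hu, extremalCosSum, sum_div]
    exact sum_congr rfl fun j _ => by rw [ha0, extremalCoeff]; ring
  have hsin : 0 < Real.sin (π / (N + 1)) :=
    Real.sin_pos_of_pos_of_lt_pi (by positivity) (by linarith [Real.pi_pos])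
  rw [hu_eq, hu_eq]
  gcongr
  exact extremalCosSum_lt_of_lt N t hst ht

theorem extremal_re_below_peak (N : ℕ) (hN : 2 ≤ N) (a0 : ℕ → ℝ)
    (ha0 : ∀ j, a0 j =
      (((N : ℝ) - j + 2) * Real.sin (π * j / (N + 1)) -
        ((N : ℝ) - j + 1) * Real.sin (π * (j - 1) / (N + 1))) /
      ((N + 1) * Real.sin (π / (N + 1))))
    (u : ℝ → ℝ)
    (hu : ∀ t, u t = ∑ j ∈ Finset.Icc 1 N, a0 j * Real.cos ((2 * (j : ℝ) - 1) * t)) :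
    ∀ t : ℝ, π / (N + 1) < t → t ≤ π / 2 → u t < u (π / (N + 1)) :=
  extremal_re_below_peak_general N a0 ha0 u hu
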